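/- Let A be a set of integers containing 0 with σ(A) = α, and let h be a positive integer. Then σ(hA) ≥ 1 − (1 − α)^h, where hA denotes the h-fold sumset A + A + ⋯ + A. -/
import Mathlib

/-- The counting function of a set of integers: `countZ A x` is the number of
elements `a ∈ A` with `1 ≤ a ≤ x`. -/
noncomputable def countZ (A : Set ℤ) (x : ℕ) : ℕ := (A ∩ Set.Icc 1 (x : ℤ)).ncard

/-- The Shnirel'man density of a set of integers: `σ(A) = inf_{n ≥ 1} A(n)/n`. -/
noncomputable def shnirelmannZ (A : Set ℤ) : ℝ :=
  ⨅ n : ℕ+, (countZ A n : ℝ) / ((n : ℕ) : ℝ)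

/-- The `h`-fold sumset `hA = A + ⋯ + A` (`h` summands): all integers of the
form `a₁ + ⋯ + a_h` with `aᵢ ∈ A ∪ {0}` for all `i`. -/
def hfoldZ (A : Set ℤ) (h : ℕ) : Set ℤ :=
  {x | ∃ f : Fin h → ℤ, (∀ i, f i ∈ A ∪ {0}) ∧ x = ∑ i, f i}

open Finset

lemma countZ_eq' (A : Set ℤ) (n : ℕ) [DecidablePred (· ∈ A)] :
    (A ∩ Set.Icc 1 (n : ℤ)).ncard = ((Finset.Icc (1:ℤ) (n:ℤ)).filter (· ∈ A)).card := by
  rw [← Set.ncard_coe_finset]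
  congr 1
  ext x
  simp only [Set.mem_inter_iff, Set.mem_Icc, Finset.coe_filter, Finset.mem_Icc, Set.mem_setOf_eq]
  tauto

lemma countZ_eq (A : Set ℤ) (n : ℕ) [DecidablePred (· ∈ A)] :
    countZ A n = ((Finset.Icc (1:ℤ) (n:ℤ)).filter (· ∈ A)).card := countZ_eq' A n

lemma card_Icc_int (n : ℕ) : (Finset.Icc (1:ℤ) (n:ℤ)).card = n := by
  rw [Int.card_Icc]; omega

lemma interval_struct (C : Finset ℤ) (v : ℤ) (h1 : ∀ m ∈ C, v < m)
    (h2 : ∀ m ∈ C, ∀ m', v < m' → m' < m → m' ∈ C) :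
    C = Finset.Ioc v (v + C.card) := by
  rcases C.eq_empty_or_nonempty with rfl | hne
  · simp
  · have hM := C.max'_mem hne
    set M := C.max' hne with hMdef
    have hCM : C = Finset.Ioc v M := by
      apply Finset.Subset.antisymm
      · intro m hm; rw [Finset.mem_Ioc]; exact ⟨h1 m hm, C.le_max' m hm⟩
      · intro m hm; rw [Finset.mem_Ioc] at hm
        rcases eq_or_lt_of_le hm.2 with rfl | hlt
        · exact hM
        · exact h2 M hM m hm.1 hlt
    have hvM : v < M := h1 M hM
    have hcard : C.card = (M - v).toNat := by rw [hCM, Int.card_Ioc]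
    have hc : v + (C.card : ℤ) = M := by omega
    calc C = Finset.Ioc v M := hCM
      _ = Finset.Ioc v (v + (C.card : ℤ)) := by rw [hc]

lemma key (A B C : Set ℤ) (h0A : (0:ℤ) ∈ A)
    (hAC : ∀ m ∈ A, m ∈ C)
    (hadd : ∀ a ∈ A ∪ ({0} : Set ℤ), ∀ b ∈ B, a + b ∈ C)
    (β : ℝ) (hβ : ∀ g : ℕ, β * g ≤ countZ B g) (n : ℕ) :
    (countZ A n : ℝ) + β * ((n:ℝ) - countZ A n) ≤ countZ C n := by
  classical
  -- the predecessor function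
  set P : ℤ → Finset ℤ :=
    fun m => (Finset.Icc (0:ℤ) (m-1)).filter (· ∈ A ∪ ({0}:Set ℤ)) with hPdef
  have hPne : ∀ m : ℤ, 1 ≤ m → (P m).Nonempty := by
    intro m hm
    refine ⟨0, ?_⟩
    rw [hPdef]
    simp only [Finset.mem_filter, Finset.mem_Icc]
    exact ⟨⟨le_refl 0, by omega⟩, Or.inr rfl⟩
  set a : ℤ → ℤ := fun m => if h : (P m).Nonempty then (P m).max' h else 0 with hadef
  have ha_mem : ∀ m : ℤ, 1 ≤ m → a m ∈ A ∪ ({0}:Set ℤ) ∧ 0 ≤ a m ∧ a m ≤ m - 1 := by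
    intro m hm
    have h1 : a m = (P m).max' (hPne m hm) := by rw [hadef]; exact dif_pos (hPne m hm)
    have h2 := (P m).max'_mem (hPne m hm)
    rw [← h1, hPdef] at h2
    simp only [Finset.mem_filter, Finset.mem_Icc] at h2
    exact ⟨h2.2, h2.1.1, h2.1.2⟩
  have ha_max : ∀ m : ℤ, 1 ≤ m → ∀ c ∈ A ∪ ({0}:Set ℤ), 0 ≤ c → c ≤ m - 1 → c ≤ a m := by
    intro m hm c hc h0c hcm
    have h1 : a m = (P m).max' (hPne m hm) := by rw [hadef]; exact dif_pos (hPne m hm)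
    rw [h1]
    apply Finset.le_max'
    rw [hPdef]
    simp only [Finset.mem_filter, Finset.mem_Icc]
    exact ⟨⟨h0c, hcm⟩, hc⟩
  -- the main finsets
  set S : Finset ℤ := (Finset.Icc (1:ℤ) (n:ℤ)).filter (· ∈ A) with hSdef
  set N : Finset ℤ := (Finset.Icc (1:ℤ) (n:ℤ)).filter (· ∉ A) with hNdef
  set U : Finset ℤ := N.filter (fun m => m - a m ∈ B) with hUdef
  set T : Finset ℤ := (Finset.Icc (1:ℤ) (n:ℤ)).filter (· ∈ C) with hTdef
  have hSN : S.card + N.card = n := by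
    rw [hSdef, hNdef, Finset.card_filter_add_card_filter_not, card_Icc_int]
  have hST : S ⊆ T := by
    intro m hm
    rw [hSdef, Finset.mem_filter] at hm
    rw [hTdef, Finset.mem_filter]
    exact ⟨hm.1, hAC m hm.2⟩
  have hUT : U ⊆ T := by
    intro m hm
    rw [hUdef, Finset.mem_filter, hNdef, Finset.mem_filter] at hm
    obtain ⟨⟨hmI, _⟩, hmB⟩ := hm
    rw [Finset.mem_Icc] at hmI
    have h1 := (ha_mem m hmI.1).1
    have := hadd (a m) h1 (m - a m) hmB
    rw [add_sub_cancel] at this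
    rw [hTdef, Finset.mem_filter, Finset.mem_Icc]
    exact ⟨hmI, this⟩
  have hdisj : Disjoint S U := by
    rw [Finset.disjoint_left]
    intro m hmS hmU
    rw [hSdef, Finset.mem_filter] at hmS
    rw [hUdef, Finset.mem_filter, hNdef, Finset.mem_filter] at hmU
    exact hmU.1.2 hmS.2
  have hcardT : S.card + U.card ≤ T.card := by
    rw [← Finset.card_union_of_disjoint hdisj]
    exact Finset.card_le_card (Finset.union_subset hST hUT)
  -- fiberwise counting
  set V : Finset ℤ := N.image a with hVdef
  have hNfib : N.card = ∑ v ∈ V, (N.filter (fun m => a m = v)).card :=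
    Finset.card_eq_sum_card_fiberwise (fun m hm => Finset.mem_image_of_mem a hm)
  have hUfib : U.card = ∑ v ∈ V, (U.filter (fun m => a m = v)).card :=
    Finset.card_eq_sum_card_fiberwise
      (fun m hm => Finset.mem_image_of_mem a (Finset.filter_subset _ _ hm))
  -- membership facts about N
  have hNmem : ∀ m ∈ N, 1 ≤ m ∧ m ≤ (n:ℤ) ∧ m ∉ A := by
    intro m hm
    rw [hNdef, Finset.mem_filter, Finset.mem_Icc] at hm
    exact ⟨hm.1.1, hm.1.2, hm.2⟩
  -- per-fiber bound
  have hfiber : ∀ v ∈ V, β * ((N.filter (fun m => a m = v)).card : ℝ)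
      ≤ ((U.filter (fun m => a m = v)).card : ℝ) := by
    intro v hv
    rw [hVdef, Finset.mem_image] at hv
    obtain ⟨m0, hm0N, hm0a⟩ := hv
    obtain ⟨hm01, _, hm0A⟩ := hNmem m0 hm0N
    have hvA : v ∈ A ∪ ({0}:Set ℤ) := hm0a ▸ (ha_mem m0 hm01).1
    have hv0 : 0 ≤ v := hm0a ▸ (ha_mem m0 hm01).2.1
    set Nv := N.filter (fun m => a m = v) with hNvdef
    have h1 : ∀ m ∈ Nv, v < m := by
      intro m hm
      rw [hNvdef, Finset.mem_filter] at hm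
      obtain ⟨hm1, _, _⟩ := hNmem m hm.1
      have := (ha_mem m hm1).2.2
      omega
    have h2 : ∀ m ∈ Nv, ∀ m', v < m' → m' < m → m' ∈ Nv := by
      intro m hm m' hvm' hm'm
      rw [hNvdef, Finset.mem_filter] at hm
      obtain ⟨hmN, hmav⟩ := hm
      obtain ⟨hm1, hmn, hmA⟩ := hNmem m hmN
      have hm'1 : 1 ≤ m' := by omega
      have hm'n : m' ≤ (n:ℤ) := by omega
      have hm'A : m' ∉ A := by
        intro hA'
        have : m' ≤ a m := ha_max m hm1 m' (Or.inl hA') (by omega) (by omega)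
        omega
      rw [hNvdef, Finset.mem_filter]
      constructor
      · rw [hNdef, Finset.mem_filter, Finset.mem_Icc]; exact ⟨⟨hm'1, hm'n⟩, hm'A⟩
      · have hle : a m' ≤ v := by
          have h3 := ha_mem m' hm'1
          have : a m' ≤ a m := ha_max m hm1 (a m') h3.1 h3.2.1 (by omega)
          omega
        have hge : v ≤ a m' := ha_max m' hm'1 v hvA hv0 (by omega)
        omega
    have hint := interval_struct Nv v h1 h2
    set g := Nv.card with hgdef
    have hUv : U.filter (fun m => a m = v) = Nv.filter (fun m => m - v ∈ B) := by
      ext m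
      simp only [hUdef, hNvdef, Finset.mem_filter]
      constructor
      · rintro ⟨⟨hm1', hm2'⟩, hm3'⟩
        exact ⟨⟨hm1', hm3'⟩, by rw [← hm3']; exact hm2'⟩
      · rintro ⟨⟨hm1', hm3'⟩, hm2'⟩
        exact ⟨⟨hm1', by rw [hm3']; exact hm2'⟩, hm3'⟩
    have himg : Nv.filter (fun m => m - v ∈ B)
        = ((Finset.Icc (1:ℤ) (g:ℤ)).filter (· ∈ B)).image (· + v) := by
      rw [hint]
      ext m
      simp only [Finset.mem_filter, Finset.mem_Ioc, Finset.mem_image, Finset.mem_Icc]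
      constructor
      · rintro ⟨⟨ha1, ha2⟩, ha3⟩
        exact ⟨m - v, ⟨⟨by omega, by omega⟩, ha3⟩, by ring⟩
      · rintro ⟨b, ⟨⟨hb1, hb2⟩, hbB⟩, rfl⟩
        exact ⟨⟨by omega, by omega⟩, by simpa using hbB⟩
    have hcount : (U.filter (fun m => a m = v)).card = countZ B g := by
      rw [hUv, himg, Finset.card_image_of_injective _ (add_left_injective v), countZ_eq]
    rw [hcount]
    exact hβ g
  -- assemble
  have hU_ge : β * (N.card : ℝ) ≤ (U.card : ℝ) := by
    rw [hNfib, hUfib]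
    push_cast
    rw [Finset.mul_sum]
    exact Finset.sum_le_sum hfiber
  have hSA : countZ A n = S.card := countZ_eq A n
  have hTC : countZ C n = T.card := countZ_eq C n
  rw [hSA, hTC]
  have hcast : (S.card : ℝ) + (N.card : ℝ) = n := by exact_mod_cast hSN
  have hT' : (S.card : ℝ) + (U.card : ℝ) ≤ (T.card : ℝ) := by exact_mod_cast hcardT
  have hN' : (n:ℝ) - (S.card : ℝ) = (N.card : ℝ) := by linarith
  rw [hN']
  linarith

lemma subset_hfoldZ (A : Set ℤ) (h : ℕ) (hh : 0 < h) : A ⊆ hfoldZ A h := by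
  intro x hx
  refine ⟨fun i => if i = (⟨0, hh⟩ : Fin h) then x else 0, fun i => ?_, ?_⟩
  · by_cases hi : i = (⟨0, hh⟩ : Fin h) <;> simp [hi, hx]
  · rw [Finset.sum_ite_eq' Finset.univ (⟨0, hh⟩ : Fin h) (fun _ => x)]
    simp

lemma add_mem_hfoldZ (A : Set ℤ) (h : ℕ) (a : ℤ) (ha : a ∈ A ∪ ({0}:Set ℤ))
    (b : ℤ) (hb : b ∈ hfoldZ A h) : a + b ∈ hfoldZ A (h + 1) := by
  obtain ⟨f, hf, rfl⟩ := hb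
  refine ⟨Fin.cons a f, fun i => ?_, ?_⟩
  · refine Fin.cases ?_ ?_ i
    · simpa using ha
    · intro j; simpa using hf j
  · rw [Fin.sum_cons]

lemma countZ_mono (A B : Set ℤ) (hAB : A ⊆ B) (n : ℕ) : countZ A n ≤ countZ B n :=
  Set.ncard_le_ncard (Set.inter_subset_inter_left _ hAB)
    ((Set.finite_Icc 1 (n:ℤ)).subset Set.inter_subset_right)

lemma countZ_le_self (A : Set ℤ) (n : ℕ) : countZ A n ≤ n := by
  classical
  calc countZ A n ≤ countZ Set.univ n := countZ_mono _ _ (Set.subset_univ A) n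
    _ = n := by
      rw [countZ, Set.univ_inter,
        show (Set.Icc (1:ℤ) (n:ℤ)) = ↑(Finset.Icc (1:ℤ) (n:ℤ)) by simp,
        Set.ncard_coe_finset, Int.card_Icc]
      omega

lemma countbound (A : Set ℤ) (h0 : (0:ℤ) ∈ A) (α : ℝ) (hα1 : α ≤ 1)
    (hc : ∀ n : ℕ, α * n ≤ countZ A n) :
    ∀ h : ℕ, 0 < h → ∀ n : ℕ, (1 - (1 - α) ^ h) * n ≤ countZ (hfoldZ A h) n := by
  intro h
  induction h with
  | zero => intro hcon; exact absurd hcon (lt_irrefl 0)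
  | succ k ih =>
    intro _ n
    rcases Nat.eq_zero_or_pos k with rfl | hk
    · have hmono := countZ_mono A (hfoldZ A 1) (subset_hfoldZ A 1 one_pos) n
      calc (1 - (1 - α) ^ 1) * n = α * n := by ring
        _ ≤ countZ A n := hc n
        _ ≤ countZ (hfoldZ A 1) n := by exact_mod_cast hmono
    · have hkey := key A (hfoldZ A k) (hfoldZ A (k + 1)) h0
        (fun m hm => subset_hfoldZ A (k + 1) (Nat.succ_pos k) hm)
        (fun a ha b hb => add_mem_hfoldZ A k a ha b hb)
        (1 - (1 - α) ^ k) (fun g => by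
          have := ih hk g
          linarith [this]) n
      have hApos := hc n
      have hpow : (0:ℝ) ≤ (1 - α) ^ k := pow_nonneg (by linarith) k
      have hps : (1 - α) ^ (k + 1) = (1 - α) ^ k * (1 - α) := pow_succ _ _
      have hprod : 0 ≤ (1 - α) ^ k * ((countZ A n : ℝ) - α * n) :=
        mul_nonneg hpow (by linarith)
      nlinarith [hkey, hprod, hps]

/-- If `A` is a set of integers containing `0` with `σ(A) = α` and `h` is a
positive integer, then `σ(hA) ≥ 1 − (1 − α)^h`. -/
theorem shnirelmann_hfold (A : Set ℤ) (h0 : (0 : ℤ) ∈ A) (α : ℝ)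
    (hα : shnirelmannZ A = α) (h : ℕ) (hh : 0 < h) :
    1 - (1 - α) ^ h ≤ shnirelmannZ (hfoldZ A h) := by
  have hbdd : ∀ B : Set ℤ, BddBelow (Set.range fun n : ℕ+ => (countZ B n : ℝ) / ((n:ℕ):ℝ)) := by
    intro B
    refine ⟨0, ?_⟩
    rintro x ⟨n, rfl⟩
    positivity
  have hle : ∀ n : ℕ+, α ≤ (countZ A n : ℝ) / ((n:ℕ):ℝ) := by
    intro n
    rw [← hα]
    exact ciInf_le (hbdd A) n
  have hc : ∀ n : ℕ, α * n ≤ countZ A n := by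
    intro n
    cases n with
    | zero => simp
    | succ k =>
      have hn : (0:ℝ) < (((k+1:ℕ)):ℝ) := by positivity
      have h1 : α ≤ (countZ A (k+1) : ℝ) / (((k+1:ℕ)):ℝ) := hle ⟨k+1, Nat.succ_pos k⟩
      rw [le_div_iff₀ hn] at h1
      linarith [h1]
  have hα1 : α ≤ 1 := by
    have h1 : α ≤ (countZ A 1 : ℝ) / ((1:ℕ):ℝ) := hle 1
    have h2 : ((countZ A 1 : ℝ)) ≤ 1 := by exact_mod_cast countZ_le_self A 1
    rw [Nat.cast_one, div_one] at h1
    linarith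
  have hb := countbound A h0 α hα1 hc h hh
  rw [shnirelmannZ]
  apply le_ciInf
  intro n
  have hn : (0:ℝ) < ((n:ℕ):ℝ) := by exact_mod_cast n.pos
  rw [le_div_iff₀ hn]
  exact hb n
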